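/- arXiv:2108.06814 — 3 statements merged into one kernel-verified Lean document; each statement's English description precedes it below -/
import Mathlib

section
/- Let G be a finitely generated group with an orientation preserving C^1 action on the circle. If G acts with a global fixed point and every group homomorphism G → (ℝ,+) is trivial (i.e., H^1(G,ℝ) = 0), then G acts trivially: every element of G acts as the identity diffeomorphism of the circle. -/
noncomputable section

open MeasureTheory

/-- The circle `S¹ = ℝ/ℤ`. -/
abbrev 𝕊 : Type := AddCircle (1 : ℝ)

/-- `F : ℝ → ℝ` is a lift of the circle bijection `f` witnessing that `f` is an
orientation preserving homeomorphism of the circle: `F` is a strictly increasing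
homeomorphism of `ℝ` (equivalently, continuous and strictly increasing) satisfying
`F (x + 1) = F x + 1`, and projecting to `f`. -/
def IsOPLift (f : Equiv.Perm 𝕊) (F : ℝ → ℝ) : Prop :=
  Continuous F ∧ StrictMono F ∧ (∀ x : ℝ, F (x + 1) = F x + 1) ∧
    ∀ x : ℝ, f (x : 𝕊) = (F x : 𝕊)

/-- `f` is an orientation preserving homeomorphism of the circle. -/
def IsOPHomeo (f : Equiv.Perm 𝕊) : Prop := ∃ F : ℝ → ℝ, IsOPLift f F

/-- `F` is a lift witnessing that `f` is an orientation preserving `C¹` diffeomorphism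
of the circle: an orientation preserving lift which is `C¹` with nowhere vanishing
derivative. -/
def IsC1Lift (f : Equiv.Perm 𝕊) (F : ℝ → ℝ) : Prop :=
  IsOPLift f F ∧ ContDiff ℝ 1 F ∧ ∀ x : ℝ, deriv F x ≠ 0

/-- `f` is an orientation preserving `C¹` diffeomorphism of the circle, i.e. an element
of `Diff¹₊(S¹)`. -/
def IsC1Diffeo (f : Equiv.Perm 𝕊) : Prop := ∃ F : ℝ → ℝ, IsC1Lift f F

/-! Lift the action to `ℝ` so that a lift `c` of the fixed point is fixed by all the lifts; by
uniqueness of lifts through the covering `ℝ → 𝕊` they form an action of `G` on `ℝ` by `C¹`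
increasing maps. At a common fixed point `a` the derivatives `(g • ·)' a` form a positive character
of `G`, whose logarithm vanishes because `H¹(G, ℝ) = 0`; so all these derivatives are `1`.
If the fixed-point set is not all of `ℝ`, pick `a` on its frontier (Thurston stability): as
`z → a` through moved points, the displacements `g • z - z`, divided by the total displacement of
a finite generating set, stay bounded and become additive in `g` since the derivatives at `a`
are `1`. Their limit along an ultrafilter is then a nonzero homomorphism `G → ℝ`. -/

open Filter Topology Asymptotics MulAction

lemma IsC1Lift.sub_intCast {f : Equiv.Perm 𝕊} {F : ℝ → ℝ} (hF : IsC1Lift f F) (k : ℤ) :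
    IsC1Lift f (fun z => F z - k) := by
  obtain ⟨⟨hcont, hmono, hperiod, hproj⟩, hC1, hderiv⟩ := hF
  refine ⟨⟨hcont.sub continuous_const, fun z w hzw => sub_lt_sub_right (hmono hzw) _,
    fun z => by simp only [hperiod]; ring, fun z => ?_⟩, hC1.sub contDiff_const, fun z => ?_⟩
  · rw [hproj, AddCircle.coe_sub, ← zsmul_one, AddCircle.coe_zsmul, AddCircle.coe_period,
      smul_zero, sub_zero]
  · rw [deriv_sub_const]
    exact hderiv z

lemma IsC1Diffeo.exists_isC1Lift_apply_eq {f : Equiv.Perm 𝕊} (hf : IsC1Diffeo f) {c : ℝ}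
    (hc : f c = c) : ∃ F : ℝ → ℝ, IsC1Lift f F ∧ F c = c := by
  obtain ⟨F, hF⟩ := hf
  obtain ⟨k, hk⟩ : ∃ k : ℤ, k • (1 : ℝ) = F c - c := by
    rw [← AddCircle.coe_eq_zero_iff, AddCircle.coe_sub, ← hF.1.2.2.2, hc, sub_self]
  exact ⟨_, hF.sub_intCast k, by simp only [zsmul_one] at hk; linarith⟩

lemma exists_mulAction_isC1Lift {G : Type*} [Group G] (ρ : G →* Equiv.Perm 𝕊)
    (hρ : ∀ g, IsC1Diffeo (ρ g)) {c : ℝ} (hc : ∀ g, ρ g c = c) :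
    ∃ _ : MulAction G ℝ, ∀ g : G, IsC1Lift (ρ g) (g • ·) ∧ g • c = c := by
  choose F hF hFc using fun g => (hρ g).exists_isC1Lift_apply_eq (hc g)
  have hcont : ∀ g, Continuous (F g) := fun g => (hF g).1.1
  have hproj : ∀ g (z : ℝ), ρ g z = F g z := fun g => (hF g).1.2.2.2
  have lift_unique : ∀ {F₁ F₂ : ℝ → ℝ}, Continuous F₁ → Continuous F₂ →
      (∀ z, (F₁ z : 𝕊) = F₂ z) → F₁ c = F₂ c → F₁ = F₂ :=
    fun h₁ h₂ h hc => (AddCircle.isCoveringMap_coe 1).eq_of_comp_eq h₁ h₂ (funext h) c hc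
  have hone : F 1 = id := lift_unique (hcont 1) continuous_id
    (fun z => by rw [← hproj, map_one]; rfl) (hFc 1)
  have hmul : ∀ g h, F (g * h) = F g ∘ F h := fun g h =>
    lift_unique (hcont (g * h)) ((hcont g).comp (hcont h))
      (fun z => by simp only [← hproj, map_mul, Equiv.Perm.mul_apply, Function.comp])
      (by simp only [Function.comp, hFc])
  exact ⟨{ smul g z := F g z
           one_smul z := congrFun hone z
           mul_smul g h z := congrFun (hmul g h) z }, fun g => ⟨hF g, hFc g⟩⟩

lemma MonoidHom.eq_one_of_nonneg {G : Type*} [Group G]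
    (h1 : ∀ φ : G →* Multiplicative ℝ, φ = 1) (χ : G →* ℝ) (hχ : ∀ g, 0 ≤ χ g) : χ = 1 := by
  have hpos : ∀ g, 0 < χ g := fun g =>
    (hχ g).lt_of_ne fun h => one_ne_zero <| by
      rw [← map_one χ, ← mul_inv_cancel g, map_mul, ← h, zero_mul]
  let logχ : G →* Multiplicative ℝ := MonoidHom.mk' (fun g => .ofAdd (Real.log (χ g)))
    fun g h => by rw [map_mul, Real.log_mul (hpos g).ne' (hpos h).ne', ofAdd_add]
  ext g
  exact Real.eq_one_of_pos_of_log_eq_zero (hpos g)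
    (ofAdd_eq_one.1 (DFunLike.congr_fun (h1 logχ) g))

section FixedPoint

variable {G : Type*} [Group G] [MulAction G ℝ] {a : ℝ}

def derivAtFixedPoint (ha : a ∈ fixedPoints G ℝ)
    (hd : ∀ g : G, DifferentiableAt ℝ (g • · : ℝ → ℝ) a) : G →* ℝ where
  toFun g := deriv (g • ·) a
  map_one' := by simp only [one_smul, deriv_id'']
  map_mul' g h := by
    rw [show (fun z : ℝ => (g * h) • z) = (g • ·) ∘ (h • ·) from funext (mul_smul g h),
      deriv_comp a (by rw [ha h]; exact hd g) (hd h), ha h]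

lemma hasStrictDerivAt_smul_one_of_mem_fixedPoints (h1 : ∀ φ : G →* Multiplicative ℝ, φ = 1)
    (hC1 : ∀ g : G, ContDiff ℝ 1 (g • · : ℝ → ℝ)) (hmono : ∀ g : G, Monotone (g • · : ℝ → ℝ))
    (ha : a ∈ fixedPoints G ℝ) (g : G) : HasStrictDerivAt (g • · : ℝ → ℝ) 1 a := by
  have hd : ∀ g : G, DifferentiableAt ℝ (g • · : ℝ → ℝ) a :=
    fun g => (hC1 g).differentiable one_ne_zero a
  have h := MonoidHom.eq_one_of_nonneg h1 (derivAtFixedPoint ha hd)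
    fun g => (hmono g).deriv_nonneg
  have hg : deriv (g • · : ℝ → ℝ) a = 1 := DFunLike.congr_fun h g
  exact hg ▸ ((hC1 g).contDiffAt (x := a)).hasStrictDerivAt one_ne_zero

end FixedPoint

lemma HasStrictDerivAt.isLittleO_comp_sub_comp {f : ℝ → ℝ} {f' a : ℝ}
    (hf : HasStrictDerivAt f f' a) {α : Type*} {l : Filter α} {u v : α → ℝ}
    (hu : Tendsto u l (𝓝 a)) (hv : Tendsto v l (𝓝 a)) :
    (fun x => f (u x) - f (v x) - f' * (u x - v x)) =o[l] fun x => u x - v x := by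
  have h := (hasDerivAtFilter_iff_isLittleO.1 hf).comp_tendsto (hu.prodMk_nhds hv)
  simpa only [Function.comp_def, smul_eq_mul, mul_comm] using h

lemma HasStrictDerivAt.tendsto_nhds_self {f : ℝ → ℝ} {f' a : ℝ} (hf : HasStrictDerivAt f f' a)
    (ha : f a = a) : Tendsto f (𝓝 a) (𝓝 a) := by
  simpa only [ha] using hf.hasDerivAt.continuousAt.tendsto

lemma Ultrafilter.exists_tendsto_of_isBigO_one {X : Type*} (U : Ultrafilter X) {v : X → ℝ}
    (hv : v =O[U] fun _ => (1 : ℝ)) : ∃ c, Tendsto v U (𝓝 c) := by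
  obtain ⟨C, hC⟩ := (isBigO_one_iff ℝ).1 hv
  obtain ⟨c, -, hc⟩ := (isCompact_closedBall (0 : ℝ) C).ultrafilter_le_nhds (U.map v)
    (le_principal_iff.2 (Ultrafilter.mem_map.2
      ((eventually_map.1 hC).mono fun x hx => mem_closedBall_zero_iff.2 hx)))
  exact ⟨c, hc⟩

section Thurston

variable {G : Type*} [Group G] [MulAction G ℝ] {a : ℝ}

def totalDisplacement (S : Finset G) (z : ℝ) : ℝ := ∑ s ∈ S, |s • z - z|

lemma totalDisplacement_ne_zero {S : Finset G} (hS : Subgroup.closure (S : Set G) = ⊤) {z : ℝ}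
    (hz : z ∉ fixedPoints G ℝ) : totalDisplacement S z ≠ 0 := by
  intro h
  have hSz : (S : Set G) ⊆ stabilizer G z := fun s hs => by
    rw [totalDisplacement, Finset.sum_eq_zero_iff_of_nonneg fun _ _ => abs_nonneg _] at h
    exact sub_eq_zero.1 (abs_eq_zero.1 (h s hs))
  exact hz fun g => (Subgroup.closure_le _).2 hSz (hS ▸ Subgroup.mem_top g)

lemma isBigO_totalDisplacement (hfix : a ∈ fixedPoints G ℝ)
    (hderiv : ∀ g : G, HasStrictDerivAt (g • · : ℝ → ℝ) 1 a) {S : Finset G}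
    (hS : Subgroup.closure (S : Set G) = ⊤) (g : G) :
    (fun z => g • z - z) =O[𝓝 a] totalDisplacement S := by
  induction (hS ▸ Subgroup.mem_top g : g ∈ Subgroup.closure (S : Set G))
    using Subgroup.closure_induction with
  | mem s hs =>
    refine isBigO_of_le _ fun z => ?_
    rw [Real.norm_eq_abs, totalDisplacement,
      Real.norm_of_nonneg (Finset.sum_nonneg fun _ _ => abs_nonneg _)]
    exact Finset.single_le_sum (f := fun s => |s • z - z|) (fun _ _ => abs_nonneg _) hs
  | one => simpa only [one_smul, sub_self] using isBigO_zero _ _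
  | mul g h _ _ hg hh =>
    have key := (hderiv g).isLittleO_comp_sub_comp
      ((hderiv h).tendsto_nhds_self (hfix h)) tendsto_id
    refine (((key.isBigO.trans hh).add hg).add hh).congr_left fun z => ?_
    simp only [id, mul_smul]
    ring
  | inv g _ hg =>
    have key := (hderiv g).isLittleO_comp_sub_comp
      ((hderiv g⁻¹).tendsto_nhds_self (hfix g⁻¹)) tendsto_id
    refine (isBigO_neg_right.1 (key.right_isBigO_add.congr_right fun z => ?_)).trans hg
    simp only [id, smul_inv_smul]
    ring

lemma isLittleO_totalDisplacement_mul (hfix : a ∈ fixedPoints G ℝ)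
    (hderiv : ∀ g : G, HasStrictDerivAt (g • · : ℝ → ℝ) 1 a) {S : Finset G}
    (hS : Subgroup.closure (S : Set G) = ⊤) (g h : G) :
    (fun z => ((g * h) • z - z) - (g • z - z) - (h • z - z)) =o[𝓝 a] totalDisplacement S := by
  have key := (hderiv g).isLittleO_comp_sub_comp
    ((hderiv h).tendsto_nhds_self (hfix h)) tendsto_id
  refine (key.trans_isBigO (isBigO_totalDisplacement hfix hderiv hS h)).congr_left fun z => ?_
  simp only [id, mul_smul]
  ring

theorem exists_monoidHom_ne_one_of_hasStrictDerivAt [Group.FG G] (hfix : a ∈ fixedPoints G ℝ)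
    (hderiv : ∀ g : G, HasStrictDerivAt (g • · : ℝ → ℝ) 1 a)
    (hmoved : a ∈ closure (fixedPoints G ℝ)ᶜ) : ∃ φ : G →* Multiplicative ℝ, φ ≠ 1 := by
  obtain ⟨S, hS⟩ := Group.FG.out (G := G)
  set m := totalDisplacement (G := G) S
  set l := 𝓝[{z | m z ≠ 0}] a
  have : l.NeBot := mem_closure_iff_nhdsWithin_neBot.1
    (closure_mono (fun z hz => totalDisplacement_ne_zero hS hz) hmoved)
  have hm : ∀ᶠ z in l, m z ≠ 0 := self_mem_nhdsWithin
  set U := Ultrafilter.of l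
  have hU : (U : Filter ℝ) ≤ l := Ultrafilter.of_le l
  set v : G → ℝ → ℝ := fun g z => (g • z - z) / m z
  have hv : ∀ g, ∃ c, Tendsto (v g) U (𝓝 c) := fun g => by
    refine U.exists_tendsto_of_isBigO_one ((isBigO_one_iff ℝ).2 ?_)
    have h := (isBigO_iff_isBoundedUnder_le_div hm).1
      ((isBigO_totalDisplacement hfix hderiv hS g).mono nhdsWithin_le_nhds)
    simpa only [v, norm_div] using h.mono hU
  choose φ hφ using hv
  have hφ_mul : ∀ g h, φ (g * h) = φ g + φ h := fun g h => by
    have h0 := ((isLittleO_totalDisplacement_mul hfix hderiv hS g h).mono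
      nhdsWithin_le_nhds).tendsto_div_nhds_zero.mono_left hU
    refine tendsto_nhds_unique (hφ (g * h)) ?_
    simpa using ((h0.add (hφ g)).add (hφ h)).congr fun z => by simp only [v]; ring
  have hφ_sum : ∑ s ∈ S, |φ s| = 1 := by
    refine tendsto_nhds_unique (tendsto_finsetSum S fun s _ => (hφ s).abs) ?_
    refine tendsto_const_nhds.congr' ((hm.filter_mono hU).mono fun z hz => ?_)
    have hm0 : 0 ≤ m z := Finset.sum_nonneg fun _ _ => abs_nonneg _
    simp only [v, abs_div, ← Finset.sum_div, abs_of_nonneg hm0]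
    exact (div_self hz).symm
  refine ⟨MonoidHom.mk' (fun g => .ofAdd (φ g)) fun g h => by rw [hφ_mul, ofAdd_add], fun h => ?_⟩
  have hφ_zero : ∀ g, φ g = 0 := fun g => ofAdd_eq_one.1 (DFunLike.congr_fun h g)
  simp [hφ_zero] at hφ_sum

end Thurston

/-- If a finitely generated group `G` has an orientation preserving `C¹`
action on the circle with a global fixed point, and every group homomorphism
`G → (ℝ, +)` is trivial (i.e. `H¹(G, ℝ) = 0`), then `G` acts trivially. -/
theorem fixed_point_and_no_hom_implies_trivial
    (G : Type*) [Group G] [Group.FG G]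
    (ρ : G →* Equiv.Perm 𝕊) (hρ : ∀ g : G, IsC1Diffeo (ρ g))
    (x : 𝕊) (hfix : ∀ g : G, ρ g x = x)
    (h1 : ∀ φ : G →* Multiplicative ℝ, φ = 1) :
    ∀ (g : G) (y : 𝕊), ρ g y = y := by
  obtain ⟨c, rfl⟩ := QuotientAddGroup.mk_surjective x
  obtain ⟨_, hlift⟩ := exists_mulAction_isC1Lift ρ hρ hfix
  simp only [IsC1Lift, IsOPLift, forall_and] at hlift
  obtain ⟨⟨⟨hcont, hmono, -, hproj⟩, hC1, -⟩, hc⟩ := hlift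
  have hderiv : ∀ a ∈ fixedPoints G ℝ, ∀ g : G, HasStrictDerivAt (g • · : ℝ → ℝ) 1 a :=
    fun a => hasStrictDerivAt_smul_one_of_mem_fixedPoints h1 hC1 fun g => (hmono g).monotone
  have hclosed : IsClosed (fixedPoints G ℝ) := by
    simp only [fixedPoints, Set.ofPred_forall]
    exact isClosed_iInter fun g => isClosed_eq (hcont g) continuous_id
  have huniv : fixedPoints G ℝ = Set.univ := by
    by_contra hne
    obtain ⟨a, ha⟩ := (nonempty_frontier_iff (s := fixedPoints G ℝ)).2 ⟨⟨c, hc⟩, hne⟩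
    have ha' : a ∈ fixedPoints G ℝ := hclosed.frontier_subset ha
    obtain ⟨φ, hφ⟩ := exists_monoidHom_ne_one_of_hasStrictDerivAt ha' (hderiv a ha')
      (frontier_subset_closure (by rwa [frontier_compl]))
    exact hφ (h1 φ)
  intro g y
  obtain ⟨z, rfl⟩ := QuotientAddGroup.mk_surjective y
  rw [hproj g z]
  exact congrArg _ (Set.eq_univ_iff_forall.1 huniv z g)
end
end

section
/- Let G be a group of orientation preserving homeomorphisms of the circle and let μ be a G-invariant Borel probability measure on the circle. Then the mean rotation number map ρ : G → ℝ/ℤ, defined by ρ(g) = ∫ (g̃(x) − x) dμ̃(x) (mod 1), where g̃ : ℝ → ℝ is a lift of g commuting with the translation x ↦ x+1, μ̃ is the lift of μ to ℝ, and the integral is taken over a single fundamental domain, is a well-defined group homomorphism (independent of the choice of lift g̃). -/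
noncomputable section

open MeasureTheory

/-- The mean rotation number of the lift `F` with respect to the measure `μ` on the
circle: the integral of `F x - x` over a fundamental domain `[0,1)` against the lift
`μ̃` of `μ` (computed as the integral over the circle of the function induced by the
periodic function `x ↦ F x - x`), reduced mod 1. -/
def meanRot (μ : Measure 𝕊) (F : ℝ → ℝ) : 𝕊 :=
  ((∫ y, (AddCircle.liftIco 1 0 fun x => F x - x) y ∂μ : ℝ) : 𝕊)

/-! Two lifts of the same circle map differ by an integer constant, and since `μ` is a
probability measure this shifts the mean displacement by that integer, which vanishes mod 1.
The displacement of a composite lift splits as `F (G x) - G x` plus `G x - x`; on the circle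
the first summand is the displacement of `F` precomposed with `g`, whose integral equals that of
the displacement of `F` by the `g`-invariance of `μ`. -/

open Function Set

theorem AddCircle.liftIco_coe_of_periodic {𝕜 B : Type*} [AddCommGroup 𝕜] [LinearOrder 𝕜]
    [IsOrderedAddMonoid 𝕜] [Archimedean 𝕜] {p : 𝕜} [hp : Fact (0 < p)] (a : 𝕜) {f : 𝕜 → B}
    (hf : Periodic f p) (x : 𝕜) : AddCircle.liftIco p a f x = f x := by
  have hx : (x : AddCircle p) = (toIcoMod hp.out a x : 𝕜) := by
    rw [← self_sub_toIcoDiv_zsmul, QuotientAddGroup.mk_sub, AddCircle.coe_zsmul,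
      AddCircle.coe_period, smul_zero, sub_zero]
  rw [hx, AddCircle.liftIco_coe_apply (toIcoMod_mem_Ico hp.out a x), ← self_sub_toIcoDiv_zsmul,
    hf.sub_zsmul_eq]

namespace IsOPLift

variable {f g : Equiv.Perm 𝕊} {F F' G : ℝ → ℝ}

theorem mul (hF : IsOPLift f F) (hG : IsOPLift g G) : IsOPLift (f * g) (F ∘ G) :=
  ⟨hF.1.comp hG.1, hF.2.1.comp hG.2.1, fun x => by simp only [comp_apply, hG.2.2.1, hF.2.2.1],
    fun x => by rw [Equiv.Perm.mul_apply, hG.2.2.2, hF.2.2.2, comp_apply]⟩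

theorem exists_intCast_add (hF : IsOPLift f F) (hF' : IsOPLift f F') :
    ∃ n : ℤ, F' = fun x => F x + n := by
  have hmaps : MapsTo (fun x => F' x - F x) univ (AddSubgroup.zmultiples (1 : ℝ)) := by
    intro x _
    rw [SetLike.mem_coe, ← QuotientAddGroup.eq_iff_sub_mem, ← hF.2.2.2, ← hF'.2.2.2]
  have hdiscrete : IsDiscrete (AddSubgroup.zmultiples (1 : ℝ) : Set ℝ) :=
    isDiscrete_iff_discreteTopology.mpr
      (inferInstanceAs (DiscreteTopology (AddSubgroup.zmultiples (1 : ℝ))))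
  have hconst : ∀ x, F' x - F x = F' 0 - F 0 := fun x =>
    isPreconnected_univ.constant_of_mapsTo hdiscrete (hF'.1.sub hF.1).continuousOn hmaps
      (mem_univ x) (mem_univ 0)
  obtain ⟨n, hn⟩ := AddSubgroup.mem_zmultiples_iff.mp (hmaps (mem_univ 0))
  refine ⟨n, funext fun x => ?_⟩
  simp only [zsmul_eq_mul, mul_one] at hn
  linarith [hconst x]

end IsOPLift

def displacement (F : ℝ → ℝ) : 𝕊 → ℝ :=
  AddCircle.liftIco 1 0 fun x => F x - x

section displacement

variable {F : ℝ → ℝ}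

theorem displacement_coe (hF : ∀ x, F (x + 1) = F x + 1) (x : ℝ) :
    displacement F x = F x - x :=
  AddCircle.liftIco_coe_of_periodic 0 (fun y => by simp only [hF]; ring) x

theorem continuous_displacement (hF : ∀ x, F (x + 1) = F x + 1) (hc : Continuous F) :
    Continuous (displacement F) :=
  AddCircle.liftIco_continuous (by show F 0 - 0 = F (0 + 1) - (0 + 1); rw [hF]; ring)
    (hc.sub continuous_id).continuousOn

theorem displacement_add_intCast (hF : ∀ x, F (x + 1) = F x + 1) (n : ℤ) :
    displacement (fun x => F x + n) = fun y => displacement F y + n := by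
  funext y
  induction y using QuotientAddGroup.induction_on with
  | H x =>
    rw [displacement_coe (fun x => by simp only [hF]; ring), displacement_coe hF]
    ring

theorem displacement_comp (hF : ∀ x, F (x + 1) = F x + 1) {g : Equiv.Perm 𝕊} {G : ℝ → ℝ}
    (hG : IsOPLift g G) (y : 𝕊) :
    displacement (F ∘ G) y = displacement F (g y) + displacement G y := by
  induction y using QuotientAddGroup.induction_on with
  | H x =>
    rw [displacement_coe (fun x => by simp only [comp_apply, hG.2.2.1, hF]), hG.2.2.2,
      displacement_coe hF, displacement_coe hG.2.2.1, comp_apply]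
    ring

end displacement

section meanRot

variable (μ : Measure 𝕊)

theorem meanRot_eq_integral_displacement (F : ℝ → ℝ) :
    meanRot μ F = ((∫ y, displacement F y ∂μ : ℝ) : 𝕊) :=
  rfl

theorem integrable_displacement [IsFiniteMeasure μ] {F : ℝ → ℝ} (hc : Continuous F)
    (hF : ∀ x, F (x + 1) = F x + 1) : Integrable (displacement F) μ :=
  (continuous_displacement hF hc).integrable_of_hasCompactSupport
    (HasCompactSupport.of_compactSpace _)

theorem meanRot_add_intCast [IsProbabilityMeasure μ] {F : ℝ → ℝ} (hc : Continuous F)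
    (hF : ∀ x, F (x + 1) = F x + 1) (n : ℤ) : meanRot μ (fun x => F x + n) = meanRot μ F := by
  have hn : ((n : ℝ) : 𝕊) = 0 := (AddCircle.coe_eq_zero_iff 1).mpr ⟨n, by simp⟩
  simp only [meanRot_eq_integral_displacement]
  rw [displacement_add_intCast hF,
    integral_add (integrable_displacement μ hc hF) (integrable_const _), integral_const,
    probReal_univ, one_smul, QuotientAddGroup.mk_add, hn, add_zero]

theorem meanRot_eq_of_isOPLift [IsProbabilityMeasure μ] {f : Equiv.Perm 𝕊} {F F' : ℝ → ℝ}
    (hF : IsOPLift f F) (hF' : IsOPLift f F') : meanRot μ F = meanRot μ F' := by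
  obtain ⟨n, rfl⟩ := hF.exists_intCast_add hF'
  exact (meanRot_add_intCast μ hF.1 hF.2.2.1 n).symm

theorem meanRot_comp [IsFiniteMeasure μ] [NeZero μ] {g : Equiv.Perm 𝕊} {F G : ℝ → ℝ}
    (hc : Continuous F) (hF : ∀ x, F (x + 1) = F x + 1) (hG : IsOPLift g G)
    (hμ : Measure.map g μ = μ) :
    meanRot μ (F ∘ G) = meanRot μ F + meanRot μ G := by
  have hg : AEMeasurable g μ := .of_map_ne_zero (hμ.symm ▸ NeZero.ne μ)
  have hFi := integrable_displacement μ hc hF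
  rw [← hμ] at hFi
  simp_rw [meanRot_eq_integral_displacement, displacement_comp hF hG]
  rw [integral_add (f := fun y => displacement F (g y)) (hFi.comp_aemeasurable hg)
      (integrable_displacement μ hG.1 hG.2.2.1), ← integral_map hg hFi.aestronglyMeasurable, hμ,
    QuotientAddGroup.mk_add]

end meanRot

theorem meanRot_well_defined_and_hom_general
    (G : Subgroup (Equiv.Perm 𝕊))
    (μ : Measure 𝕊) [IsProbabilityMeasure μ]
    (hinv : ∀ f ∈ G, Measure.map f μ = μ) :
    (∀ f ∈ G, ∀ F F' : ℝ → ℝ, IsOPLift f F → IsOPLift f F' →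
        meanRot μ F = meanRot μ F') ∧
      (∀ f ∈ G, ∀ g ∈ G, ∀ Ff Fg Ffg : ℝ → ℝ,
        IsOPLift f Ff → IsOPLift g Fg → IsOPLift (f * g) Ffg →
          meanRot μ Ffg = meanRot μ Ff + meanRot μ Fg) := by
  refine ⟨fun f _ F F' hF hF' => meanRot_eq_of_isOPLift μ hF hF', ?_⟩
  intro f _ g hg Ff Fg Ffg hFf hFg hFfg
  rw [meanRot_eq_of_isOPLift μ hFfg (hFf.mul hFg), meanRot_comp μ hFf.1 hFf.2.2.1 hFg (hinv g hg)]

/-- Let `G` be a group of orientation preserving homeomorphisms of the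
circle and let `μ` be a `G`-invariant Borel probability measure on the circle.  Then the
mean rotation number map `ρ : G → ℝ/ℤ`, `ρ(g) = ∫ (g̃(x) - x) dμ̃(x) (mod 1)`, is
well defined (independent of the choice of lift `g̃`) and is a group homomorphism. -/
theorem meanRot_well_defined_and_hom
    (G : Subgroup (Equiv.Perm 𝕊)) (hop : ∀ f ∈ G, IsOPHomeo f)
    (μ : Measure 𝕊) [IsProbabilityMeasure μ]
    (hinv : ∀ f ∈ G, Measure.map f μ = μ) :
    (∀ f ∈ G, ∀ F F' : ℝ → ℝ, IsOPLift f F → IsOPLift f F' →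
        meanRot μ F = meanRot μ F') ∧
      (∀ f ∈ G, ∀ g ∈ G, ∀ Ff Fg Ffg : ℝ → ℝ,
        IsOPLift f Ff → IsOPLift g Fg → IsOPLift (f * g) Ffg →
          meanRot μ Ffg = meanRot μ Ff + meanRot μ Fg) :=
  meanRot_well_defined_and_hom_general G μ hinv
end
end

section
/- Let g be an orientation preserving homeomorphism of the circle preserving a Borel probability measure μ (g_*μ = μ). If g has at least one fixed point, then the (topological) support of μ is contained in the fixed point set of g. -/
noncomputable section

open MeasureTheory

/-- The topological support of a measure `μ` on the circle: the set of points all of whose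
neighbourhoods have positive measure (equivalently, the smallest closed set of full
measure). -/
def msupport (μ : Measure 𝕊) : Set 𝕊 := {x : 𝕊 | ∀ U ∈ nhds x, 0 < μ U}

/-!
Lift a fixed point of `g` to a fixed point `t` of a lift `F`; then `F` preserves the fundamental
domain `(t, t + 1)`. If the point `x = s` with `s` in that domain is not fixed, a small interval
`U ∋ s` with `F '' U ∩ U = ∅` is wandering: the `F`-orbit of a point of `U` is monotone and stays
in `(t, t + 1)`, so once it has left the interval `U` it never returns, and neither does its
image on the circle. By Poincaré recurrence a wandering set has measure zero, so `x` is not in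
the support of `μ`.
-/

open Set Function Topology

theorem Monotone.iterate_notMem_of_map_notMem {α : Type*} [LinearOrder α] {F : α → α}
    (hF : Monotone F) {U : Set α} (hU : U.OrdConnected) {y : α} (hy : y ∈ U) (hFy : F y ∉ U)
    {m : ℕ} (hm : m ≠ 0) : F^[m] y ∉ U := by
  intro hmy
  have h1m : 1 ≤ m := Nat.one_pos.trans_le (Nat.pos_of_ne_zero hm)
  -- the orbit of `y` is monotone, so `F y` lies between `y` and `F^[m] y`
  have hbetween : F y ∈ uIcc y (F^[m] y) := by
    rcases le_total y (F y) with h | h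
    · exact mem_uIcc_of_le h (hF.monotone_iterate_of_le_map h h1m)
    · exact mem_uIcc_of_ge (hF.antitone_iterate_of_map_le h h1m) h
  exact hFy (hU.uIcc_subset hy hmy hbetween)

theorem exists_mem_nhds_forall_map_notMem {X : Type*} [TopologicalSpace X] [T2Space X]
    {F : X → X} {s : X} (hF : ContinuousAt F s) (hs : F s ≠ s) :
    ∃ V ∈ 𝓝 s, ∀ y ∈ V, F y ∉ V := by
  obtain ⟨A, B, hA, hB, hAB⟩ := t2_separation_nhds hs.symm
  exact ⟨A ∩ F ⁻¹' B, Filter.inter_mem hA (hF hB),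
    fun y hy hFy => hAB.notMem_of_mem_right hy.2 hFy.1⟩

theorem MeasureTheory.MeasurePreserving.measure_eq_zero_of_iterate_notMem {α : Type*}
    [MeasurableSpace α] {μ : Measure α} [IsFiniteMeasure μ] {f : α → α}
    (hf : MeasurePreserving f μ μ) {s : Set α} (hs : NullMeasurableSet s μ)
    (hwander : ∀ x ∈ s, ∀ m ≠ 0, f^[m] x ∉ s) : μ s = 0 := by
  by_contra h
  obtain ⟨x, hx, m, hm, hmx⟩ := hf.exists_mem_iterate_mem hs h
  exact hwander x hx m hm hmx

namespace IsOPLift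

variable {f : Equiv.Perm 𝕊} {F : ℝ → ℝ}

theorem semiconj (hF : IsOPLift f F) : Semiconj ((↑) : ℝ → 𝕊) F f :=
  fun x => (hF.2.2.2 x).symm

theorem continuous (hF : IsOPLift f F) : Continuous f := by
  rw [(QuotientAddGroup.isQuotientMap_mk (AddSubgroup.zmultiples (1 : ℝ))).continuous_iff]
  exact (QuotientAddGroup.continuous_mk.comp hF.1).congr hF.semiconj

theorem sub_intCast (hF : IsOPLift f F) (k : ℤ) : IsOPLift f (fun x => F x - k) := by
  obtain ⟨hc, hm, hper, hproj⟩ := hF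
  refine ⟨hc.sub continuous_const, fun x y h => sub_lt_sub_right (hm h) _,
    fun x => by simp only [hper]; ring, fun x => ?_⟩
  have hk : ((k : ℝ) : 𝕊) = 0 := (AddCircle.coe_eq_zero_iff _).mpr ⟨k, by simp⟩
  show f x = ((F x - k : ℝ) : 𝕊)
  rw [hproj, AddCircle.coe_sub, hk, sub_zero]

theorem exists_isFixedPt (hF : IsOPLift f F) {t : ℝ} (ht : f t = t) :
    ∃ F' : ℝ → ℝ, IsOPLift f F' ∧ F' t = t := by
  have : ((F t - t : ℝ) : 𝕊) = 0 := by rw [AddCircle.coe_sub, ← hF.2.2.2, ht, sub_self]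
  obtain ⟨k, hk⟩ := (AddCircle.coe_eq_zero_iff _).mp this
  refine ⟨_, hF.sub_intCast k, ?_⟩
  simp only [zsmul_one] at hk
  linarith

theorem mapsTo_Ioo (hF : IsOPLift f F) {t : ℝ} (ht : F t = t) :
    MapsTo F (Ioo t (t + 1)) (Ioo t (t + 1)) := fun y hy => by
  have := hF.2.2.1 t
  exact ⟨ht ▸ hF.2.1 hy.1, by rw [← ht, ← this]; exact hF.2.1 hy.2⟩

theorem exists_isOpen_wandering (hF : IsOPLift f F) {t s : ℝ} (ht : F t = t)
    (hs : s ∈ Ioo t (t + 1)) (hFs : F s ≠ s) :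
    ∃ V : Set 𝕊, IsOpen V ∧ (s : 𝕊) ∈ V ∧ ∀ x ∈ V, ∀ m ≠ 0, f^[m] x ∉ V := by
  obtain ⟨W, hW, hWF⟩ := exists_mem_nhds_forall_map_notMem hF.1.continuousAt hFs
  obtain ⟨ε, hε, hεW⟩ := Metric.mem_nhds_iff.mp (Filter.inter_mem hW (Ioo_mem_nhds hs.1 hs.2))
  have hball : (Metric.ball s ε).OrdConnected := by rw [Real.ball_eq_Ioo]; exact ordConnected_Ioo
  refine ⟨(↑) '' Metric.ball s ε, QuotientAddGroup.isOpenMap_coe _ Metric.isOpen_ball,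
    mem_image_of_mem _ (Metric.mem_ball_self hε), ?_⟩
  rintro _ ⟨y, hy, rfl⟩ m hm ⟨z, hz, hzy⟩
  have hFy : F y ∉ Metric.ball s ε := fun h => hWF y (hεW hy).1 (hεW h).1
  refine hF.2.1.monotone.iterate_notMem_of_map_notMem hball hy hFy hm ?_
  have hyI : F^[m] y ∈ Ioo t (t + 1) := (hF.mapsTo_Ioo ht).iterate m (hεW hy).2
  rw [← (hF.semiconj.iterate_right m) y] at hzy
  rwa [← (AddCircle.coe_eq_coe_iff_of_mem_Ico (Ioo_subset_Ico_self (hεW hz).2)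
    (Ioo_subset_Ico_self hyI)).mp hzy]

end IsOPLift

theorem AddCircle.exists_mem_Ioo_coe_eq {p : ℝ} [Fact (0 < p)] {t : ℝ} {x : AddCircle p}
    (hx : x ≠ t) : ∃ s ∈ Ioo t (t + p), (s : AddCircle p) = x := by
  set s := AddCircle.equivIco p t x
  have hsx : ((s : ℝ) : AddCircle p) = x := (AddCircle.equivIco p t).symm_apply_apply x
  refine ⟨s, ⟨s.2.1.lt_of_ne fun h => hx ?_, s.2.2⟩, hsx⟩
  rw [← hsx, ← h]

/-- Let `g` be an orientation preserving homeomorphism of the circle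
preserving a Borel probability measure `μ`.  If `g` has at least one fixed point, then the
support of `μ` is contained in the fixed point set of `g`. -/
theorem support_subset_fixedPoints
    (g : Equiv.Perm 𝕊) (hg : IsOPHomeo g)
    (μ : Measure 𝕊) [IsProbabilityMeasure μ]
    (hinv : Measure.map g μ = μ)
    (hfix : ∃ x : 𝕊, g x = x) :
    msupport μ ⊆ {x : 𝕊 | g x = x} := by
  intro x hx
  by_contra hgx
  obtain ⟨F₀, hF₀⟩ := hg
  obtain ⟨x₀, ht⟩ := hfix
  obtain ⟨t, rfl⟩ := QuotientAddGroup.mk_surjective x₀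
  obtain ⟨F, hF, hFt⟩ := hF₀.exists_isFixedPt ht
  obtain ⟨s, hs, rfl⟩ := AddCircle.exists_mem_Ioo_coe_eq (t := t) (x := x) fun h => hgx (h ▸ ht)
  obtain ⟨V, hVo, hsV, hV⟩ :=
    hF.exists_isOpen_wandering hFt hs fun h => hgx (show g s = s by rw [← hF.semiconj s, h])
  have hpres : MeasurePreserving g μ μ := ⟨hF.continuous.measurable, hinv⟩
  exact (hx V (hVo.mem_nhds hsV)).ne'
    (hpres.measure_eq_zero_of_iterate_notMem hVo.measurableSet.nullMeasurableSet hV)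
end
end
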